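/- Assume λ_tot = λ₂ + λ_net with λ₂ > 0 and λ_net ≥ 0, and let π be a stationary distribution of the free chain with parameters (λ₁, λ_tot, μ, θ) such that Σ_{x∈ℕ²} x₂·π(x) < ∞. Then the fixed-point equation λ_net = θ·Σ_{x∈ℕ²} x₂·π(x) holds if and only if π(0,0) = 1 − ϱ, where ϱ = (λ₁ + λ₂)/μ. -/

import Mathlib

/-!
Summing the balance equations over the states with `x₁ + x₂ ≤ n` (summing over all of `ℕ²`
would only give a tautology), everything cancels except the flow across the cut between the
levels `n` and `n + 1`: `(λ₁ + λ_tot) · π(level n) = ∑_{level n+1} (total down-rate) · π`.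
Summing these cut equations over `n`, and using that the total down-rate out of `x ≠ 0` is
`μ + θ x₂`, gives `λ₁ + λ_tot = μ (1 - π(0,0)) + θ ∑ x₂ π(x)`. With `λ_tot = λ₂ + λ_net` the
fixed-point equation is then equivalent to `μ (1 - π(0,0)) = λ₁ + λ₂`.
-/

open Filter Topology

/-- `π` is a stationary distribution of the free chain with parameters
`(l1, lt, mu, th)` (arrival rates `l1`, `lt`, service rate `mu`, mobility rate `th`). -/
def IsStationaryFree (l1 lt mu th : ℝ) (π : ℕ × ℕ → ℝ) : Prop :=
  (∀ x, 0 ≤ π x) ∧ HasSum π 1 ∧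
    ∀ x1 x2 : ℕ,
      π (x1, x2) * (l1 + lt + (if (x1, x2) ≠ ((0 : ℕ), (0 : ℕ)) then mu else 0)
          + th * (x2 : ℝ))
        = l1 * (if 1 ≤ x1 then π (x1 - 1, x2) else 0)
          + lt * (if 1 ≤ x2 then π (x1, x2 - 1) else 0)
          + mu * ((x1 : ℝ) + 1) / ((x1 : ℝ) + 1 + (x2 : ℝ)) * π (x1 + 1, x2)
          + (mu * ((x2 : ℝ) + 1) / ((x1 : ℝ) + (x2 : ℝ) + 1) + th * ((x2 : ℝ) + 1))
              * π (x1, x2 + 1)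

open Finset

theorem HasSum.sum_antidiagonal {A α : Type*} [AddCommMonoid A] [HasAntidiagonal A]
    [AddCommMonoid α] [TopologicalSpace α] [ContinuousAdd α] [RegularSpace α]
    {f : A × A → α} {a : α} (h : HasSum f a) :
    HasSum (fun n ↦ ∑ x ∈ antidiagonal n, f x) a :=
  (HasAntidiagonal.sigmaAntidiagonalEquivProd.hasSum_iff.2 h).sigma fun n ↦ by
    rw [← Finset.sum_coe_sort]
    exact hasSum_fintype _

section AntidiagonalShift

variable {M : Type*} [AddCommMonoid M]

theorem Finset.Nat.sum_antidiagonal_succ_ite_fst (g : ℕ × ℕ → M) (n : ℕ) :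
    ∑ x ∈ antidiagonal (n + 1), (if 1 ≤ x.1 then g (x.1 - 1, x.2) else 0) =
      ∑ x ∈ antidiagonal n, g x := by
  simp [Nat.sum_antidiagonal_succ]

theorem Finset.Nat.sum_antidiagonal_succ_ite_snd (g : ℕ × ℕ → M) (n : ℕ) :
    ∑ x ∈ antidiagonal (n + 1), (if 1 ≤ x.2 then g (x.1, x.2 - 1) else 0) =
      ∑ x ∈ antidiagonal n, g x := by
  simp [Nat.sum_antidiagonal_succ']

theorem Finset.Nat.sum_antidiagonal_shift_fst {g : ℕ × ℕ → M} (hg : ∀ n, g (0, n) = 0)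
    (n : ℕ) : ∑ x ∈ antidiagonal n, g (x.1 + 1, x.2) = ∑ x ∈ antidiagonal (n + 1), g x := by
  simp [Nat.sum_antidiagonal_succ, hg]

theorem Finset.Nat.sum_antidiagonal_shift_snd {g : ℕ × ℕ → M} (hg : ∀ n, g (n, 0) = 0)
    (n : ℕ) : ∑ x ∈ antidiagonal n, g (x.1, x.2 + 1) = ∑ x ∈ antidiagonal (n + 1), g x := by
  simp [Nat.sum_antidiagonal_succ', hg]

end AntidiagonalShift

def QuadrantBalance (a b : ℝ) (d e π : ℕ × ℕ → ℝ) : Prop :=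
  ∀ x : ℕ × ℕ, π x * (a + b + d x + e x) =
    a * (if 1 ≤ x.1 then π (x.1 - 1, x.2) else 0) + b * (if 1 ≤ x.2 then π (x.1, x.2 - 1) else 0)
      + d (x.1 + 1, x.2) * π (x.1 + 1, x.2) + e (x.1, x.2 + 1) * π (x.1, x.2 + 1)

namespace QuadrantBalance

variable {a b : ℝ} {d e π : ℕ × ℕ → ℝ}

theorem sum_antidiagonal (hb : QuadrantBalance a b d e π) (hd : ∀ n, d (0, n) = 0)
    (he : ∀ n, e (n, 0) = 0) (n : ℕ) :
    (a + b) * ∑ x ∈ antidiagonal n, π x + ∑ x ∈ antidiagonal n, (d x + e x) * π x =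
      a * ∑ x ∈ antidiagonal n, (if 1 ≤ x.1 then π (x.1 - 1, x.2) else 0)
        + b * ∑ x ∈ antidiagonal n, (if 1 ≤ x.2 then π (x.1, x.2 - 1) else 0)
        + ∑ x ∈ antidiagonal (n + 1), (d x + e x) * π x := by
  have hsum := Finset.sum_congr rfl fun x (_ : x ∈ antidiagonal n) ↦ hb x
  simp only [sum_add_distrib, ← mul_sum, add_mul, mul_comm (π _)] at hsum ⊢
  rw [← Nat.sum_antidiagonal_shift_fst (g := fun x ↦ d x * π x) (by simp [hd]),
    ← Nat.sum_antidiagonal_shift_snd (g := fun x ↦ e x * π x) (by simp [he])]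
  linear_combination hsum

theorem up_flow_eq_down_flow (hb : QuadrantBalance a b d e π) (hd : ∀ n, d (0, n) = 0)
    (he : ∀ n, e (n, 0) = 0) (n : ℕ) :
    (a + b) * ∑ x ∈ antidiagonal n, π x = ∑ x ∈ antidiagonal (n + 1), (d x + e x) * π x := by
  induction n with
  | zero => simpa [hd, he] using hb.sum_antidiagonal hd he 0
  | succ n ih =>
    have := hb.sum_antidiagonal hd he (n + 1)
    rw [Nat.sum_antidiagonal_succ_ite_fst, Nat.sum_antidiagonal_succ_ite_snd] at this
    linear_combination this + ih

theorem add_eq_of_hasSum_down_flow (hb : QuadrantBalance a b d e π) (hd : ∀ n, d (0, n) = 0)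
    (he : ∀ n, e (n, 0) = 0) (hπ : HasSum π 1) {s : ℝ}
    (hs : HasSum (fun x ↦ (d x + e x) * π x) s) : a + b = s := by
  have hup : HasSum (fun n ↦ (a + b) * ∑ x ∈ antidiagonal n, π x) (a + b) := by
    simpa using hπ.sum_antidiagonal.mul_left (a + b)
  have hdown := (hasSum_nat_add_iff' 1).2 hs.sum_antidiagonal
  simp only [range_one, sum_singleton, Nat.antidiagonal_zero, hd, he, add_zero, zero_mul,
    sub_zero] at hdown
  exact hup.unique (by simpa only [← hb.up_flow_eq_down_flow hd he] using hdown)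

end QuadrantBalance

noncomputable def freeDownRate₁ (mu : ℝ) (x : ℕ × ℕ) : ℝ := mu * x.1 / (x.1 + x.2)

noncomputable def freeDownRate₂ (mu th : ℝ) (x : ℕ × ℕ) : ℝ := mu * x.2 / (x.1 + x.2) + th * x.2

theorem freeDownRate_add (mu th : ℝ) (x : ℕ × ℕ) :
    freeDownRate₁ mu x + freeDownRate₂ mu th x = (if x = (0, 0) then 0 else mu) + th * x.2 := by
  split_ifs with hx
  · simp [freeDownRate₁, freeDownRate₂, hx]
  · have hpos : (x.1 : ℝ) + x.2 ≠ 0 := by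
      rw [← Nat.cast_add, Nat.cast_ne_zero]
      contrapose! hx
      exact Prod.ext (by omega) (by omega)
    simp only [freeDownRate₁, freeDownRate₂]
    field_simp
    ring

theorem IsStationaryFree.quadrantBalance {l1 lt mu th : ℝ} {π : ℕ × ℕ → ℝ}
    (hπ : IsStationaryFree l1 lt mu th π) :
    QuadrantBalance l1 lt (freeDownRate₁ mu) (freeDownRate₂ mu th) π := by
  rintro ⟨x1, x2⟩
  have h := hπ.2.2 x1 x2
  rw [add_assoc _ (freeDownRate₁ _ _), freeDownRate_add]
  simp only [ne_eq, ite_not] at h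
  simp only [freeDownRate₁, freeDownRate₂, Nat.cast_add, Nat.cast_one]
  linear_combination h

theorem IsStationaryFree.arrival_rate_eq_departure_rate {l1 lt mu th : ℝ} {π : ℕ × ℕ → ℝ}
    (hπ : IsStationaryFree l1 lt mu th π) (hsum : Summable fun x : ℕ × ℕ ↦ (x.2 : ℝ) * π x) :
    l1 + lt = mu * (1 - π (0, 0)) + th * ∑' x : ℕ × ℕ, (x.2 : ℝ) * π x := by
  refine hπ.quadrantBalance.add_eq_of_hasSum_down_flow (by simp [freeDownRate₁])
    (by simp [freeDownRate₂]) hπ.2.1 ?_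
  simp_rw [freeDownRate_add, add_mul, ite_mul, zero_mul, mul_assoc]
  have := (hasSum_ite_sub_hasSum (hπ.2.1.mul_left mu) (0, 0)).add (hsum.hasSum.mul_left th)
  simpa only [mul_sub, mul_one] using this

theorem fixed_point_iff_empty_probability_general
    (l1 l2 lnet mu th : ℝ) (hmu : 0 < mu)
    (π : ℕ × ℕ → ℝ) (hπ : IsStationaryFree l1 (l2 + lnet) mu th π)
    (hsum : Summable (fun x : ℕ × ℕ => (x.2 : ℝ) * π x)) :
    (lnet = th * ∑' x : ℕ × ℕ, (x.2 : ℝ) * π x) ↔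
      π (0, 0) = 1 - (l1 + l2) / mu := by
  have hflow := hπ.arrival_rate_eq_departure_rate hsum
  rw [eq_sub_iff_add_eq, ← eq_sub_iff_add_eq', div_eq_iff hmu.ne']
  constructor <;> intro h <;> linarith

/-- The fixed-point equation λ_net = θ·E[X₂] holds iff π(0,0) = 1 − ϱ
where ϱ = (λ₁ + λ₂)/μ. -/
theorem fixed_point_iff_empty_probability
    (l1 l2 lnet mu th : ℝ) (hl1 : 0 < l1) (hl2 : 0 < l2) (hlnet : 0 ≤ lnet)
    (hmu : 0 < mu) (hth : 0 ≤ th)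
    (π : ℕ × ℕ → ℝ) (hπ : IsStationaryFree l1 (l2 + lnet) mu th π)
    (hsum : Summable (fun x : ℕ × ℕ => (x.2 : ℝ) * π x)) :
    (lnet = th * ∑' x : ℕ × ℕ, (x.2 : ℝ) * π x) ↔
      π (0, 0) = 1 - (l1 + l2) / mu :=
  fixed_point_iff_empty_probability_general l1 l2 lnet mu th hmu π hπ hsum
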